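/- Let x ≠ y be elements of norm 1 in the Zorn vector matrix algebra over a field k. Then the following are equivalent: (i) (xy⁻¹)³ = 1 and xy⁻¹ ≠ 1; (ii) (xy⁻¹)² + xy⁻¹ + 1 = 0; (iii) ⟨x, y⟩ = −1; (iv) N(x + y) = 1. -/

import Mathlib

/-- Zorn vector matrices `[[a, α], [β, b]]` over a field `k`. -/
@[ext]
structure Zorn (k : Type*) where
  a : k
  α : Fin 3 → k
  β : Fin 3 → k
  b : k

namespace Zorn

variable {k : Type*} [Field k]

/-- Dot product on `k³`. -/
def dot (u v : Fin 3 → k) : k := u 0 * v 0 + u 1 * v 1 + u 2 * v 2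

/-- Cross product on `k³`. -/
def cross (u v : Fin 3 → k) : Fin 3 → k :=
  ![u 1 * v 2 - u 2 * v 1, u 2 * v 0 - u 0 * v 2, u 0 * v 1 - u 1 * v 0]

/-- Zorn vector matrix multiplication. -/
instance : Mul (Zorn k) :=
  ⟨fun x y =>
    ⟨x.a * y.a + dot x.α y.β,
     fun i => x.a * y.α i + y.b * x.α i - cross x.β y.β i,
     fun i => y.a * x.β i + x.b * y.β i + cross x.α y.α i,
     dot x.β y.α + x.b * y.b⟩⟩

instance : One (Zorn k) := ⟨⟨1, 0, 0, 1⟩⟩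
instance : Zero (Zorn k) := ⟨⟨0, 0, 0, 0⟩⟩
instance : Add (Zorn k) := ⟨fun x y => ⟨x.a + y.a, x.α + y.α, x.β + y.β, x.b + y.b⟩⟩
instance : Neg (Zorn k) := ⟨fun x => ⟨-x.a, -x.α, -x.β, -x.b⟩⟩
instance : SMul k (Zorn k) := ⟨fun c x => ⟨c * x.a, c • x.α, c • x.β, c * x.b⟩⟩

/-- The norm (determinant) of a Zorn vector matrix. -/
def N (x : Zorn k) : k := x.a * x.b - dot x.α x.β

/-- The bilinear form associated with the norm. -/
def polarN (x y : Zorn k) : k := N (x + y) - N x - N y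


/-- The inverse of a norm-one Zorn vector matrix. -/
def inv' (x : Zorn k) : Zorn k := ⟨x.b, -x.α, -x.β, x.a⟩

/- Auxiliary component lemmas. -/
lemma mul_a' (x y : Zorn k) : (x * y).a = x.a * y.a + dot x.α y.β := rfl
lemma mul_al' (x y : Zorn k) (i : Fin 3) :
    (x * y).α i = x.a * y.α i + y.b * x.α i - cross x.β y.β i := rfl
lemma mul_be' (x y : Zorn k) (i : Fin 3) :
    (x * y).β i = y.a * x.β i + x.b * y.β i + cross x.α y.α i := rfl
lemma mul_b' (x y : Zorn k) : (x * y).b = dot x.β y.α + x.b * y.b := rfl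
lemma one_a' : (1 : Zorn k).a = 1 := rfl
lemma one_al' (i : Fin 3) : (1 : Zorn k).α i = 0 := rfl
lemma one_be' (i : Fin 3) : (1 : Zorn k).β i = 0 := rfl
lemma one_b' : (1 : Zorn k).b = 1 := rfl
lemma add_a' (x y : Zorn k) : (x + y).a = x.a + y.a := rfl
lemma add_al' (x y : Zorn k) (i : Fin 3) : (x + y).α i = x.α i + y.α i := rfl
lemma add_be' (x y : Zorn k) (i : Fin 3) : (x + y).β i = x.β i + y.β i := rfl
lemma add_b' (x y : Zorn k) : (x + y).b = x.b + y.b := rfl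
lemma zero_a' : (0 : Zorn k).a = 0 := rfl
lemma zero_al' (i : Fin 3) : (0 : Zorn k).α i = 0 := rfl
lemma zero_be' (i : Fin 3) : (0 : Zorn k).β i = 0 := rfl
lemma zero_b' : (0 : Zorn k).b = 0 := rfl
lemma smul_a' (c : k) (x : Zorn k) : (c • x).a = c * x.a := rfl
lemma smul_al' (c : k) (x : Zorn k) (i : Fin 3) : (c • x).α i = c * x.α i := rfl
lemma smul_be' (c : k) (x : Zorn k) (i : Fin 3) : (c • x).β i = c * x.β i := rfl
lemma smul_b' (c : k) (x : Zorn k) : (c • x).b = c * x.b := rfl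

lemma cross0 (u v : Fin 3 → k) : cross u v 0 = u 1 * v 2 - u 2 * v 1 := rfl
lemma cross1 (u v : Fin 3 → k) : cross u v 1 = u 2 * v 0 - u 0 * v 2 := rfl
lemma cross2 (u v : Fin 3 → k) : cross u v 2 = u 0 * v 1 - u 1 * v 0 := rfl

lemma cross_self (u : Fin 3 → k) (i : Fin 3) : cross u u i = 0 := by
  fin_cases i <;> simp [cross0, cross1, cross2] <;> ring

lemma dot_comm' (u v : Fin 3 → k) : dot u v = dot v u := by unfold dot; ring

omit [Field k] in
lemma ext' {x y : Zorn k} (ha : x.a = y.a) (hal : ∀ i, x.α i = y.α i)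
    (hbe : ∀ i, x.β i = y.β i) (hb : x.b = y.b) : x = y :=
  Zorn.ext ha (funext hal) (funext hbe) hb

/-- The alternative law `(x y⁻¹) y = N(y) • x` as a polynomial identity. -/
lemma alt (x y : Zorn k) : (x * inv' y) * y = N y • x := by
  refine ext' ?_ (fun i => ?_) (fun i => ?_) ?_
  · simp [mul_a', mul_al', mul_be', mul_b', smul_a', inv', dot, N, cross0, cross1, cross2]
    ring
  · rw [mul_al', smul_al']
    fin_cases i <;>
      simp [mul_a', mul_al', mul_be', mul_b', inv', dot, N, cross0, cross1, cross2] <;> ring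
  · rw [mul_be', smul_be']
    fin_cases i <;>
      simp [mul_a', mul_al', mul_be', mul_b', inv', dot, N, cross0, cross1, cross2] <;> ring
  · simp [mul_a', mul_al', mul_be', mul_b', smul_b', inv', dot, N, cross0, cross1, cross2]
    ring

lemma N_mul' (x y : Zorn k) : N (x * y) = N x * N y := by
  simp only [N, mul_a', mul_b', mul_al', mul_be', dot, cross0, cross1, cross2]
  ring

lemma N_inv'' (y : Zorn k) : N (inv' y) = N y := by
  simp only [N, inv', dot, Pi.neg_apply]; ring

lemma cross_zero_left (v : Fin 3 → k) (i : Fin 3) : cross (0 : Fin 3 → k) v i = 0 := by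
  fin_cases i <;> simp [cross0, cross1, cross2]

lemma cross_zero_right (u : Fin 3 → k) (i : Fin 3) : cross u (0 : Fin 3 → k) i = 0 := by
  fin_cases i <;> simp [cross0, cross1, cross2]

lemma one_mul'' (y : Zorn k) : (1 : Zorn k) * y = y := by
  have h0 : (1 : Zorn k).α = 0 := rfl
  have h0' : (1 : Zorn k).β = 0 := rfl
  refine ext' ?_ (fun i => ?_) (fun i => ?_) ?_
  · rw [mul_a', one_a', h0]; simp [dot]
  · rw [mul_al', one_a', one_al', h0', cross_zero_left]; ring
  · rw [mul_be', one_b', one_be', h0, cross_zero_left]; ring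
  · rw [mul_b', one_b', h0']; simp [dot]

lemma one_smul'' (x : Zorn k) : (1 : k) • x = x := by
  refine ext' ?_ (fun i => ?_) (fun i => ?_) ?_ <;>
    simp [smul_a', smul_al', smul_be', smul_b']

/-- For distinct norm-one `x, y`, the following are equivalent:
`xy⁻¹` has order three; `(xy⁻¹)² + xy⁻¹ + 1 = 0`; `⟨x,y⟩ = −1`; `N(x+y) = 1`. -/
theorem order_three_tfae (x y : Zorn k) (hx : N x = 1) (hy : N y = 1) (hne : x ≠ y) :
    [((x * inv' y) * (x * inv' y)) * (x * inv' y) = 1 ∧ x * inv' y ≠ 1,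
     (x * inv' y) * (x * inv' y) + x * inv' y + 1 = 0,
     polarN x y = -1,
     N (x + y) = 1].TFAE := by
  set z := x * inv' y with hz
  set t := z.a + z.b with htdef
  -- norm of z is 1
  have hNz : N z = 1 := by rw [hz, N_mul', N_inv'', hx, hy, one_mul]
  have hd : dot z.α z.β = z.a * z.b - 1 := by
    have h := hNz; unfold N at h; linear_combination -h
  -- trace of z is the polar form
  have ht : t = polarN x y := by
    rw [htdef, hz]
    simp only [mul_a', mul_b', inv', polarN, N, dot, add_a', add_b', add_al', add_be',
      Pi.neg_apply]
    ring
  -- z ≠ 1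
  have hzne : z ≠ 1 := by
    intro h
    apply hne
    have h1 : (x * inv' y) * y = N y • x := alt x y
    rw [← hz, h, one_mul'', hy, one_smul''] at h1
    exact h1.symm
  -- Cayley–Hamilton components
  have hsq_a : (z * z).a = t * z.a - 1 := by
    rw [mul_a', hd, htdef]; ring
  have hsq_b : (z * z).b = t * z.b - 1 := by
    rw [mul_b', dot_comm', hd, htdef]; ring
  have hsq_al : ∀ i, (z * z).α i = t * z.α i := by
    intro i; rw [mul_al', cross_self, htdef]; ring
  have hsq_be : ∀ i, (z * z).β i = t * z.β i := by
    intro i; rw [mul_be', cross_self, htdef]; ring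
  -- cube components
  have hdotsq : dot (z * z).α z.β = t * dot z.α z.β := by
    unfold dot; rw [hsq_al 0, hsq_al 1, hsq_al 2]; ring
  have hdotsq' : dot (z * z).β z.α = t * dot z.α z.β := by
    unfold dot; rw [hsq_be 0, hsq_be 1, hsq_be 2]; ring
  have hc_a : ((z * z) * z).a = (t ^ 2 - 1) * z.a - t := by
    rw [mul_a', hdotsq, hd, hsq_a]; ring
  have hc_b : ((z * z) * z).b = (t ^ 2 - 1) * z.b - t := by
    rw [mul_b', hdotsq', hd, hsq_b]; ring
  have hc_al : ∀ i, ((z * z) * z).α i = (t ^ 2 - 1) * z.α i := by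
    intro i; rw [mul_al']
    have hcr : cross (z * z).β z.β i = 0 := by
      fin_cases i <;> simp [cross0, cross1, cross2, hsq_be] <;> ring
    rw [hcr, hsq_a, hsq_al]; ring
  have hc_be : ∀ i, ((z * z) * z).β i = (t ^ 2 - 1) * z.β i := by
    intro i; rw [mul_be']
    have hcr : cross (z * z).α z.α i = 0 := by
      fin_cases i <;> simp [cross0, cross1, cross2, hsq_al] <;> ring
    rw [hcr, hsq_b, hsq_be]; ring
  tfae_have 3 → 4 := by
    intro h3; unfold polarN at h3; linear_combination h3 + hx + hy
  tfae_have 4 → 3 := by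
    intro h4; unfold polarN; rw [h4, hx, hy]; ring
  tfae_have 3 → 2 := by
    intro h3
    have hm1 : t = -1 := by rw [ht, h3]
    refine ext' ?_ (fun i => ?_) (fun i => ?_) ?_
    · rw [add_a', add_a', hsq_a, hm1, one_a', zero_a']; ring
    · rw [add_al', add_al', hsq_al, hm1, one_al', zero_al']; ring
    · rw [add_be', add_be', hsq_be, hm1, one_be', zero_be']; ring
    · rw [add_b', add_b', hsq_b, hm1, one_b', zero_b']; ring
  tfae_have 2 → 3 := by
    intro h2
    rw [← ht]
    by_contra hc
    have hne' : t + 1 ≠ 0 := fun h => hc (by linear_combination h)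
    have ea : (t + 1) * z.a = 0 := by
      have h := congrArg Zorn.a h2
      rw [add_a', add_a', hsq_a, one_a', zero_a'] at h; linear_combination h
    have eal : ∀ i, (t + 1) * z.α i = 0 := by
      intro i
      have h := congrArg (fun w => Zorn.α w i) h2
      rw [add_al', add_al', hsq_al, one_al', zero_al'] at h; linear_combination h
    have ha0 : z.a = 0 := (mul_eq_zero.mp ea).resolve_left hne'
    have hal0 : ∀ i, z.α i = 0 := fun i => (mul_eq_zero.mp (eal i)).resolve_left hne'
    have hN0 : N z = 0 := by
      unfold N dot; rw [ha0, hal0 0, hal0 1, hal0 2]; ring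
    rw [hNz] at hN0; exact one_ne_zero hN0
  tfae_have 3 → 1 := by
    intro h3
    have hm1 : t = -1 := by rw [ht, h3]
    refine ⟨?_, hzne⟩
    refine ext' ?_ (fun i => ?_) (fun i => ?_) ?_
    · rw [hc_a, hm1, one_a']; ring
    · rw [hc_al, hm1, one_al']; ring
    · rw [hc_be, hm1, one_be']; ring
    · rw [hc_b, hm1, one_b']; ring
  tfae_have 1 → 3 := by
    rintro ⟨hcube, -⟩
    rw [← ht]
    by_contra hcm
    have ea : (t ^ 2 - 1) * z.a - t = 1 := by
      have h := congrArg Zorn.a hcube; rw [hc_a, one_a'] at h; exact h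
    have eb : (t ^ 2 - 1) * z.b - t = 1 := by
      have h := congrArg Zorn.b hcube; rw [hc_b, one_b'] at h; exact h
    have eal : ∀ i, (t ^ 2 - 1) * z.α i = 0 := fun i => by
      have h := congrArg (fun w => Zorn.α w i) hcube
      rw [hc_al, one_al'] at h; exact h
    have ebe : ∀ i, (t ^ 2 - 1) * z.β i = 0 := fun i => by
      have h := congrArg (fun w => Zorn.β w i) hcube
      rw [hc_be, one_be'] at h; exact h
    have ht1 : t ≠ 1 := by
      intro h1
      rw [h1] at ea
      have h2 : (2 : k) = 0 := by linear_combination -ea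
      exact hcm (by rw [h1]; linear_combination h2)
    have hsq : t ^ 2 - 1 ≠ 0 := by
      intro h
      have h' : (t - 1) * (t + 1) = 0 := by linear_combination h
      rcases mul_eq_zero.mp h' with h'' | h''
      · exact ht1 (by linear_combination h'')
      · exact hcm (by linear_combination h'')
    have hal0 : ∀ i, z.α i = 0 := fun i => (mul_eq_zero.mp (eal i)).resolve_left hsq
    have hbe0 : ∀ i, z.β i = 0 := fun i => (mul_eq_zero.mp (ebe i)).resolve_left hsq
    have hab : z.a = z.b := by
      have h' : (t ^ 2 - 1) * (z.a - z.b) = 0 := by linear_combination ea - eb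
      rcases mul_eq_zero.mp h' with h'' | h''
      · exact absurd h'' hsq
      · linear_combination h''
    have hprod : z.a * z.a = 1 := by
      have hdz : dot z.α z.β = 0 := by
        unfold dot; rw [hal0 0, hal0 1, hal0 2]; ring
      rw [hdz] at hd
      rw [← hab] at hd
      linear_combination -hd
    have hea' : z.a = 1 := by
      have h2a : t = 2 * z.a := by rw [htdef, hab]; ring
      rw [h2a] at ea
      linear_combination ea - 4 * z.a * hprod
    apply hzne
    refine ext' ?_ (fun i => ?_) (fun i => ?_) ?_
    · rw [hea', one_a']
    · rw [hal0, one_al']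
    · rw [hbe0, one_be']
    · rw [← hab, hea', one_b']
  tfae_finish

end Zorn
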